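/- arXiv:1908.08395 — 2 statements merged into one kernel-verified Lean document; each statement's English description precedes it below -/
import Mathlib

section
/- The matrix-valued rational function R(x) = Σ_{1≤i,j≤n} E_ii⊗E_jj ((q - xq^{-1})/(1-x))^{δ(i≡j)} + (q - q^{-1}) Σ_{1≤i≠j≤n} E_ij⊗E_ji x^{δ(i<j)}/(1-x) satisfies the Yang–Baxter equation with spectral parameters: R_{12}(z₁/z₂) R_{13}(z₁/z₃) R_{23}(z₂/z₃) = R_{23}(z₂/z₃) R_{13}(z₁/z₃) R_{12}(z₁/z₂) as an identity of End(V⊗V⊗V)-valued rational functions, where V = ℚ(q)ⁿ. -/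
/-!
STATEMENT 0: The quantum affine gl_n R-matrix satisfies the Yang–Baxter equation
with spectral parameters, as an identity of End(V⊗V⊗V)-valued rational functions
(formalized pointwise, at every point of an arbitrary field where all the
denominators are nonzero; this is equivalent to the rational-function identity).
-/

open scoped Matrix

/-- The quantum affine `gl_n` R-matrix
`R(x) = Σ_{i,j} E_ii⊗E_jj ((q - xq⁻¹)/(1-x))^{δ(i≡j)}
      + (q - q⁻¹) Σ_{i≠j} E_ij⊗E_ji x^{δ(i<j)}/(1-x)`,
written as a matrix on `V ⊗ V` where `V = Kⁿ`, with rows/columns indexed by pairs.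
(The entry at `((i,j),(k,l))` is the coefficient of `E_ik ⊗ E_jl`.) -/
def Rm (n : ℕ) {K : Type*} [Field K] (q x : K) :
    Matrix (Fin n × Fin n) (Fin n × Fin n) K := fun p p' =>
  (if p = p' then (if p.1 = p.2 then (q - x * q⁻¹) / (1 - x) else 1) else 0) +
  (if p.1 ≠ p.2 ∧ p'.1 = p.2 ∧ p'.2 = p.1 then
    (q - q⁻¹) * (if p.1 < p.2 then x else 1) / (1 - x) else 0)

/-- Place an operator on `V ⊗ V` in the tensor factors 1,2 of `V ⊗ V ⊗ V`. -/
def emb12 {n : ℕ} {K : Type*} [Field K]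
    (M : Matrix (Fin n × Fin n) (Fin n × Fin n) K) :
    Matrix (Fin n × Fin n × Fin n) (Fin n × Fin n × Fin n) K := fun p p' =>
  M (p.1, p.2.1) (p'.1, p'.2.1) * (if p.2.2 = p'.2.2 then 1 else 0)

/-- Place an operator on `V ⊗ V` in the tensor factors 1,3 of `V ⊗ V ⊗ V`. -/
def emb13 {n : ℕ} {K : Type*} [Field K]
    (M : Matrix (Fin n × Fin n) (Fin n × Fin n) K) :
    Matrix (Fin n × Fin n × Fin n) (Fin n × Fin n × Fin n) K := fun p p' =>
  M (p.1, p.2.2) (p'.1, p'.2.2) * (if p.2.1 = p'.2.1 then 1 else 0)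

/-- Place an operator on `V ⊗ V` in the tensor factors 2,3 of `V ⊗ V ⊗ V`. -/
def emb23 {n : ℕ} {K : Type*} [Field K]
    (M : Matrix (Fin n × Fin n) (Fin n × Fin n) K) :
    Matrix (Fin n × Fin n × Fin n) (Fin n × Fin n × Fin n) K := fun p p' =>
  M (p.2.1, p.2.2) (p'.2.1, p'.2.2) * (if p.1 = p'.1 then 1 else 0)

/-!
Clearing denominators, `Rm n q x = (q (1 - x))⁻¹ • Rpoly n q x` with `Rpoly` polynomial in `q`
and `x`, and the scalar factors are the same on both sides of the Yang–Baxter equation, so it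
suffices to prove it for `Rpoly` with `x = u`, `u v`, `v`. Each factor `R_ab` sends the basis
row `e_ijk` to a combination of itself and the row with the `a`-th and `b`-th indices swapped,
so both sides send `e_ijk` into the span of the permutations of `e_ijk`. Once the relative order
of `i, j, k` is fixed all weights are explicit, and the equation becomes a polynomial identity
in `q, u, v`.
-/

section YangBaxter

variable {n : ℕ} {K : Type*} [Field K]

def swapForm (d s : Fin n → Fin n → K) : Matrix (Fin n × Fin n) (Fin n × Fin n) K := fun p p' =>
  (if p' = p then d p.1 p.2 else 0) + (if p' = p.swap then s p.1 p.2 else 0)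

section swapForm

variable (d s : Fin n → Fin n → K) (X : Matrix (Fin n × Fin n × Fin n) (Fin n × Fin n × Fin n) K)
  (i j k : Fin n)

lemma emb12_swapForm_mul_row :
    (emb12 (swapForm d s) * X) (i, j, k) = d i j • X (i, j, k) + s i j • X (j, i, k) := by
  ext r
  simp [Matrix.mul_apply, emb12, swapForm, Fintype.sum_prod_type, Prod.ext_iff, add_mul, ite_and,
    Finset.sum_add_distrib]

lemma emb13_swapForm_mul_row :
    (emb13 (swapForm d s) * X) (i, j, k) = d i k • X (i, j, k) + s i k • X (k, j, i) := by
  ext r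
  simp [Matrix.mul_apply, emb13, swapForm, Fintype.sum_prod_type, Prod.ext_iff, add_mul, ite_and,
    Finset.sum_add_distrib]

lemma emb23_swapForm_mul_row :
    (emb23 (swapForm d s) * X) (i, j, k) = d j k • X (i, j, k) + s j k • X (i, k, j) := by
  ext r
  simp [Matrix.mul_apply, emb23, swapForm, Fintype.sum_prod_type, Prod.ext_iff, add_mul, ite_and,
    Finset.sum_add_distrib]

end swapForm

def Rpoly (n : ℕ) (q x : K) : Matrix (Fin n × Fin n) (Fin n × Fin n) K :=
  swapForm (fun i j => if i = j then q ^ 2 - x else q * (1 - x))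
    (fun i j => if i = j then 0 else (q ^ 2 - 1) * if i < j then x else 1)

lemma Rm_eq_smul_Rpoly {q x : K} (hq : q ≠ 0) (hx : 1 - x ≠ 0) :
    Rm n q x = (q * (1 - x))⁻¹ • Rpoly n q x := by
  ext ⟨i, j⟩ ⟨k, l⟩
  simp only [Rm, Rpoly, swapForm, Matrix.smul_apply, smul_eq_mul, Prod.ext_iff, Prod.fst_swap,
    Prod.snd_swap, mul_add]
  split_ifs <;> first | omega | (field_simp; ring)

theorem Rpoly_yangBaxter (q u v : K) :
    emb12 (Rpoly n q u) * emb13 (Rpoly n q (u * v)) * emb23 (Rpoly n q v) =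
    emb23 (Rpoly n q v) * emb13 (Rpoly n q (u * v)) * emb12 (Rpoly n q u) := by
  simp only [Matrix.mul_assoc]
  -- with a trailing `* 1`, both sides of each row become combinations of rows of `1`
  nth_rw 1 [← Matrix.mul_one (emb23 (Rpoly n q v))]
  nth_rw 2 [← Matrix.mul_one (emb12 (Rpoly n q u))]
  funext ⟨i, j, k⟩
  simp only [Rpoly, emb12_swapForm_mul_row, emb13_swapForm_mul_row, emb23_swapForm_mul_row]
  obtain hij | hij | hij := lt_trichotomy i j <;> obtain hjk | hjk | hjk := lt_trichotomy j k <;>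
    obtain hik | hik | hik := lt_trichotomy i k <;> (try subst_vars) <;>
    first
    | (exfalso; omega)
    | (simp only [*, ne_of_lt, ne_of_gt, lt_asymm, lt_irrefl, if_true, if_false]; module)

lemma emb12_smul (c : K) (M : Matrix (Fin n × Fin n) (Fin n × Fin n) K) :
    emb12 (c • M) = c • emb12 M := by
  ext; simp [emb12]

lemma emb13_smul (c : K) (M : Matrix (Fin n × Fin n) (Fin n × Fin n) K) :
    emb13 (c • M) = c • emb13 M := by
  ext; simp [emb13]

lemma emb23_smul (c : K) (M : Matrix (Fin n × Fin n) (Fin n × Fin n) K) :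
    emb23 (c • M) = c • emb23 M := by
  ext; simp [emb23]

lemma yangBaxter_smul {A B C : Matrix (Fin n × Fin n) (Fin n × Fin n) K}
    (h : emb12 A * emb13 B * emb23 C = emb23 C * emb13 B * emb12 A) (a b c : K) :
    emb12 (a • A) * emb13 (b • B) * emb23 (c • C) =
      emb23 (c • C) * emb13 (b • B) * emb12 (a • A) := by
  simp only [emb12_smul, emb13_smul, emb23_smul, Matrix.smul_mul, Matrix.mul_smul, smul_smul, h]
  congr 1
  ring

lemma one_sub_div_ne_zero {a b : K} (hb : b ≠ 0) (hab : a ≠ b) : 1 - a / b ≠ 0 := by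
  rw [one_sub_div hb]
  exact div_ne_zero (sub_ne_zero.2 hab.symm) hb

end YangBaxter

theorem yang_baxter_spectral_general (n : ℕ) (K : Type*) [Field K] (q : K) (hq : q ≠ 0)
    (z1 z2 z3 : K) (h2 : z2 ≠ 0) (h3 : z3 ≠ 0)
    (h12 : z1 ≠ z2) (h13 : z1 ≠ z3) (h23 : z2 ≠ z3) :
    emb12 (Rm n q (z1 / z2)) * emb13 (Rm n q (z1 / z3)) * emb23 (Rm n q (z2 / z3)) =
    emb23 (Rm n q (z2 / z3)) * emb13 (Rm n q (z1 / z3)) * emb12 (Rm n q (z1 / z2)) := by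
  have hdiv : z1 / z3 = z1 / z2 * (z2 / z3) := (div_mul_div_cancel₀ h2).symm
  rw [Rm_eq_smul_Rpoly hq (one_sub_div_ne_zero h2 h12),
    Rm_eq_smul_Rpoly hq (one_sub_div_ne_zero h3 h13),
    Rm_eq_smul_Rpoly hq (one_sub_div_ne_zero h3 h23), hdiv]
  exact yangBaxter_smul (Rpoly_yangBaxter q _ _) _ _ _

/-- Yang–Baxter equation with spectral parameters:
`R₁₂(z₁/z₂) R₁₃(z₁/z₃) R₂₃(z₂/z₃) = R₂₃(z₂/z₃) R₁₃(z₁/z₃) R₁₂(z₁/z₂)`. -/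
theorem yang_baxter_spectral (n : ℕ) (K : Type*) [Field K] (q : K) (hq : q ≠ 0)
    (z1 z2 z3 : K) (h1 : z1 ≠ 0) (h2 : z2 ≠ 0) (h3 : z3 ≠ 0)
    (h12 : z1 ≠ z2) (h13 : z1 ≠ z3) (h23 : z2 ≠ z3) :
    emb12 (Rm n q (z1 / z2)) * emb13 (Rm n q (z1 / z3)) * emb23 (Rm n q (z2 / z3)) =
    emb23 (Rm n q (z2 / z3)) * emb13 (Rm n q (z1 / z3)) * emb12 (Rm n q (z1 / z2)) :=
  yang_baxter_spectral_general n K q hq z1 z2 z3 h2 h3 h12 h13 h23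
end

section
/- The R-matrix R(x) = Σ_{i,j} E_ii⊗E_jj ((q - xq^{-1})/(1-x))^{δ(i≡j)} + (q - q^{-1}) Σ_{i≠j} E_ij⊗E_ji x^{δ(i<j)}/(1-x) satisfies the unitarity relation R_{12}(x) R_{21}(1/x) = f(x) · Id_{V⊗V}, where f(x) = (1-xq²)(1-xq^{-2})/(1-x)². -/
/-- The flip of tensor factors applied to an operator on `V ⊗ V`:
`Σ A⊗B ↦ Σ B⊗A`. -/
def flipM {n : ℕ} {K : Type*} [Field K]
    (M : Matrix (Fin n × Fin n) (Fin n × Fin n) K) :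
    Matrix (Fin n × Fin n) (Fin n × Fin n) K := fun p p' =>
  M (p.2, p.1) (p'.2, p'.1)

private lemma aux0 {K : Type*} [Field K] (q x : K) (hq : q ≠ 0) (hx0 : x ≠ 0)
    (hx1' : (1:K) - x ≠ 0) (hx1i : (1:K) - x⁻¹ ≠ 0) :
    (q - x * q⁻¹) / (1 - x) * ((q - x⁻¹ * q⁻¹) / (1 - x⁻¹)) =
      (1 - x * q ^ 2) * (1 - x * (q⁻¹) ^ 2) / (1 - x) ^ 2 := by
  rw [div_mul_div_comm, div_eq_div_iff (mul_ne_zero hx1' hx1i) (pow_ne_zero 2 hx1')]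
  have hxd : (1:K) - x⁻¹ = -(1-x) * x⁻¹ := by field_simp; ring
  rw [hxd]
  field_simp
  ring

private lemma aux1 {K : Type*} [Field K] (q x : K) (hq : q ≠ 0) (hx0 : x ≠ 0)
    (hx1' : (1:K) - x ≠ 0) (hx1i : (1:K) - x⁻¹ ≠ 0) (t t' : K) (h : t * t' = 1) :
    1 + (q - q⁻¹) * t / (1 - x) * ((q - q⁻¹) * t' / (1 - x⁻¹)) =
      (1 - x * q ^ 2) * (1 - x * (q⁻¹) ^ 2) / (1 - x) ^ 2 := by
  rw [div_mul_div_comm, add_div' _ _ _ (mul_ne_zero hx1' hx1i),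
    div_eq_div_iff (mul_ne_zero hx1' hx1i) (pow_ne_zero 2 hx1')]
  have hxd : (1:K) - x⁻¹ = -(1-x) * x⁻¹ := by field_simp; ring
  rw [hxd]
  have e : (q - q⁻¹) * t * ((q - q⁻¹) * t') = (q - q⁻¹)^2 * (t * t') := by ring
  rw [e, h, mul_one]
  field_simp
  ring

private lemma aux2 {K : Type*} [Field K] (q x : K) (hq : q ≠ 0) (hx0 : x ≠ 0)
    (hx1' : (1:K) - x ≠ 0) (hx1i : (1:K) - x⁻¹ ≠ 0) (t t' : K)
    (h : t' * (1 - x) + t * (-(1-x) * x⁻¹) = 0) :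
    (q - q⁻¹) * t' / (1 - x⁻¹) + (q - q⁻¹) * t / (1 - x) = 0 := by
  rw [div_add_div _ _ hx1i hx1', div_eq_zero_iff]
  left
  have hxd : (1:K) - x⁻¹ = -(1-x) * x⁻¹ := by field_simp; ring
  rw [hxd]
  calc (q - q⁻¹) * t' * (1 - x) + (-(1-x) * x⁻¹) * ((q - q⁻¹) * t)
      = (q - q⁻¹) * (t' * (1 - x) + t * (-(1-x) * x⁻¹)) := by ring
    _ = 0 := by rw [h, mul_zero]

/-- Unitarity: `R₁₂(x) R₂₁(1/x) = f(x) • Id` where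
`f(x) = (1-xq²)(1-xq⁻²)/(1-x)²`. -/
theorem unitarity (n : ℕ) (K : Type*) [Field K] (q x : K)
    (hq : q ≠ 0) (hx0 : x ≠ 0) (hx1 : x ≠ 1) :
    Rm n q x * flipM (Rm n q x⁻¹) =
      ((1 - x * q ^ 2) * (1 - x * (q⁻¹) ^ 2) / (1 - x) ^ 2) •
        (1 : Matrix (Fin n × Fin n) (Fin n × Fin n) K) := by
  have hx1' : (1:K) - x ≠ 0 := sub_ne_zero.2 fun h => hx1 h.symm
  have hxinv : x⁻¹ ≠ 1 := fun h => hx1 (by rw [← inv_inv x, h, inv_one])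
  have hx1i : (1:K) - x⁻¹ ≠ 0 := sub_ne_zero.2 fun h => hxinv h.symm
  ext ⟨i,j⟩ ⟨k,l⟩
  rw [Matrix.mul_apply]
  by_cases hij : i = j
  · subst hij
    rw [Finset.sum_eq_single ((i,i) : Fin n × Fin n)]
    · by_cases hkl : k = i ∧ l = i
      · obtain ⟨rfl, rfl⟩ := hkl
        simp only [Rm, flipM, Matrix.smul_apply, Matrix.one_apply, if_pos rfl]
        simp only [ne_eq, not_true_eq_false, false_and, if_false, add_zero, smul_eq_mul, mul_one, if_true]
        exact aux0 q x hq hx0 hx1' hx1i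
      · have hne : ((i,i) : Fin n × Fin n) ≠ (k,l) := by
          rintro h
          exact hkl ⟨(Prod.ext_iff.mp h).1.symm, (Prod.ext_iff.mp h).2.symm⟩
        simp only [Rm, flipM, Matrix.smul_apply, Matrix.one_apply, if_neg hne, smul_eq_mul]
        have h1 : ((i,i) : Fin n × Fin n) ≠ (l,k) := by
          rintro h
          exact hkl ⟨(Prod.ext_iff.mp h).2.symm, (Prod.ext_iff.mp h).1.symm⟩
        simp [h1]
    · intro b _ hb
      have : Rm n q x (i,i) b = 0 := by
        simp only [Rm]
        rw [if_neg (fun h => hb h.symm),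
          if_neg (by rintro ⟨-, h1, h2⟩; exact hb (Prod.ext_iff.mpr ⟨h1, h2⟩))]
        simp
      rw [this, zero_mul]
    · simp
  · have hji : j ≠ i := fun h => hij h.symm
    have hne : ((i,j) : Fin n × Fin n) ≠ (j,i) := by
      simp only [ne_eq, Prod.mk.injEq, not_and]
      intro h _; exact hij h
    have hne' : ((j,i) : Fin n × Fin n) ≠ (i,j) := fun h => hne h.symm
    rw [← Finset.sum_subset (Finset.subset_univ {((i,j) : Fin n × Fin n), (j,i)})]
    swap
    · intro p _ hp
      simp only [Finset.mem_insert, Finset.mem_singleton, not_or] at hp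
      have : Rm n q x (i,j) p = 0 := by
        simp only [Rm]
        rw [if_neg (fun h => hp.1 h.symm),
          if_neg (by rintro ⟨-, h1, h2⟩; exact hp.2 (Prod.ext_iff.mpr ⟨h1, h2⟩))]
        simp
      rw [this, zero_mul]
    rw [Finset.sum_pair hne]
    have e1 : Rm n q x (i,j) (i,j) = 1 := by simp [Rm, hij]
    have e2 : Rm n q x (i,j) (j,i) =
        (q - q⁻¹) * (if i < j then x else 1) / (1 - x) := by
      simp [Rm, hne, hij]
    rw [e1, one_mul, e2]
    simp only [flipM, Matrix.smul_apply, Matrix.one_apply, smul_eq_mul]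
    by_cases hkl : (k, l) = ((i, j) : Fin n × Fin n)
    · have hk : k = i := (Prod.ext_iff.mp hkl).1
      have hl : l = j := (Prod.ext_iff.mp hkl).2
      rw [hk, hl]
      have f1 : Rm n q x⁻¹ (j,i) (j,i) = 1 := by simp [Rm, hji]
      have f2 : Rm n q x⁻¹ (i,j) (j,i) =
          (q - q⁻¹) * (if i < j then x⁻¹ else 1) / (1 - x⁻¹) := by
        simp [Rm, hne, hij]
      rw [f1, f2, if_pos rfl, mul_one]
      rcases lt_or_gt_of_ne (hij : i ≠ j) with h | h
      · rw [if_pos h, if_pos h]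
        exact aux1 q x hq hx0 hx1' hx1i x x⁻¹ (mul_inv_cancel₀ hx0)
      · rw [if_neg (asymm h), if_neg (asymm h)]
        exact aux1 q x hq hx0 hx1' hx1i 1 1 (mul_one 1)
    · by_cases hkl2 : (k, l) = ((j, i) : Fin n × Fin n)
      · have hk : k = j := (Prod.ext_iff.mp hkl2).1
        have hl : l = i := (Prod.ext_iff.mp hkl2).2
        rw [hk, hl]
        have f1 : Rm n q x⁻¹ (j,i) (i,j) =
            (q - q⁻¹) * (if j < i then x⁻¹ else 1) / (1 - x⁻¹) := by
          simp [Rm, hji, hne']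
        have f2 : Rm n q x⁻¹ (i,j) (i,j) = 1 := by simp [Rm, hij]
        rw [f1, f2, mul_one, if_neg hne, mul_zero]
        rcases lt_or_gt_of_ne (hij : i ≠ j) with h | h
        · rw [if_pos h, if_neg (asymm h)]
          exact aux2 q x hq hx0 hx1' hx1i x 1 (by field_simp; ring)
        · rw [if_neg (asymm h), if_pos h]
          exact aux2 q x hq hx0 hx1' hx1i 1 x⁻¹ (by ring)
      · have f1 : Rm n q x⁻¹ (j,i) (l,k) = 0 := by
          simp only [Rm]
          rw [if_neg (by
              rintro h
              exact hkl (Prod.ext_iff.mpr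
                ⟨(Prod.ext_iff.mp h).2.symm, (Prod.ext_iff.mp h).1.symm⟩)),
            if_neg (by
              rintro ⟨-, h1, h2⟩
              exact hkl2 (Prod.ext_iff.mpr ⟨h2, h1⟩))]
          simp
        have f2 : Rm n q x⁻¹ (i,j) (l,k) = 0 := by
          simp only [Rm]
          rw [if_neg (by
              rintro h
              exact hkl2 (Prod.ext_iff.mpr
                ⟨(Prod.ext_iff.mp h).2.symm, (Prod.ext_iff.mp h).1.symm⟩)),
            if_neg (by
              rintro ⟨-, h1, h2⟩
              exact hkl (Prod.ext_iff.mpr ⟨h2, h1⟩))]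
          simp
        rw [f1, f2, mul_zero, add_zero, if_neg (fun h => hkl h.symm), mul_zero]
end
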